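/- Let G be a connected balanced bipartite graph with colour classes V and E, |V| = |E| = n, and E = {e₁,…,e_n}. The coefficient of x^{n−1} in the interior polynomial I_G(x) is nonzero if and only if for every i, the function f_i with f_i(e_i) = 0 and f_i(e_j) = 1 for all j ≠ i is a hypertree of G. Moreover, this coefficient is at most 1. -/

import Mathlib

open SimpleGraph

variable {V E : Type*}

/-- The bipartite graph on `V ⊕ E` determined by the incidence relation `r`. -/
def BipGraph (r : V → E → Prop) : SimpleGraph (V ⊕ E) where
  Adj x y := (∃ v e, x = Sum.inl v ∧ y = Sum.inr e ∧ r v e) ∨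
             (∃ v e, x = Sum.inr e ∧ y = Sum.inl v ∧ r v e)
  symm := by
    constructor
    rintro x y (⟨v, e, rfl, rfl, h⟩ | ⟨v, e, rfl, rfl, h⟩)
    · exact Or.inr ⟨v, e, rfl, rfl, h⟩
    · exact Or.inl ⟨v, e, rfl, rfl, h⟩
  loopless := by
    constructor
    rintro x (⟨v, e, rfl, h, _⟩ | ⟨v, e, rfl, h, _⟩) <;> simp_all

/-- `τ` is a spanning tree of `G`. -/
def IsSpanningTree {α : Type*} (G τ : SimpleGraph α) : Prop :=
  τ ≤ G ∧ τ.Connected ∧ τ.IsAcyclic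

/-- A hypertree of the hypergraph induced by the bipartite graph `BipGraph r`
(with `E` the set of hyperedges): a function realized by a spanning tree. -/
def IsHypertree (r : V → E → Prop) (f : E → ℕ) : Prop :=
  ∃ τ : SimpleGraph (V ⊕ E), IsSpanningTree (BipGraph r) τ ∧
    ∀ e : E, (τ.neighborSet (Sum.inr e)).ncard = f e + 1

/-- The restriction of a graph `H` on `V ⊕ E` (typically a subgraph of `BipGraph r`)
to the hyperedge set `A` together with all `V`-vertices incident (in `G`) to `A`. -/
def BipRestrict (r : V → E → Prop) (H : SimpleGraph (V ⊕ E)) (A : Set E) :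
    SimpleGraph ({v : V // ∃ e ∈ A, r v e} ⊕ A) where
  Adj x y := H.Adj (Sum.elim (fun v => Sum.inl v.1) (fun e => Sum.inr e.1) x)
               (Sum.elim (fun v => Sum.inl v.1) (fun e => Sum.inr e.1) y)
  symm := ⟨fun _ _ h => H.adj_symm h⟩
  loopless := by
    constructor
    rintro (v | e) h <;> exact H.irrefl h

/-- `μ(A) = |⋃A| - c(A)`. -/
noncomputable def mu (r : V → E → Prop) (A : Set E) : ℕ :=
  Nat.card {v : V // ∃ e ∈ A, r v e} -
    Nat.card (BipRestrict r (BipGraph r) A).ConnectedComponent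

/-- `A` is tight at `f`. -/
noncomputable def Tight (r : V → E → Prop) (f : E → ℕ) (A : Finset E) : Prop :=
  ∑ e ∈ A, f e = mu r (↑A : Set E)

open Classical in
/-- The function obtained from `f` by decreasing `f e` by one and increasing `f e'` by one. -/
noncomputable def Transfer (f : E → ℕ) (e e' : E) : E → ℕ :=
  fun x => if x = e then f e - 1 else if x = e' then f e' + 1 else f x

/-- The internal inactivity of `f`: the number of internally inactive hyperedges. -/
noncomputable def intInact (r : V → E → Prop) [LT E] (f : E → ℕ) : ℕ :=
  Nat.card {e : E // ∃ e', e' < e ∧ IsHypertree r (Transfer f e e')}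

/-- The external inactivity of `f`: the number of externally inactive hyperedges. -/
noncomputable def extInact (r : V → E → Prop) [LT E] (f : E → ℕ) : ℕ :=
  Nat.card {e : E // ∃ e', e' < e ∧ IsHypertree r (Transfer f e' e)}

/-- The interior polynomial `I_G(x) = ∑_f x^{ῑ(f)}`. -/
noncomputable def interiorPoly (r : V → E → Prop) [Fintype E] [LT E] : Polynomial ℤ :=
  ∑ i ∈ Finset.range (Fintype.card E + 1),
    Polynomial.C ((Nat.card {f : E → ℕ // IsHypertree r f ∧ intInact r f = i} : ℕ) : ℤ) *
      Polynomial.X ^ i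

/-- The exterior polynomial `X_G(y) = ∑_f y^{ε̄(f)}`. -/
noncomputable def exteriorPoly (r : V → E → Prop) [Fintype E] [LT E] : Polynomial ℤ :=
  ∑ i ∈ Finset.range (Fintype.card E + 1),
    Polynomial.C ((Nat.card {f : E → ℕ // IsHypertree r f ∧ extInact r f = i} : ℕ) : ℤ) *
      Polynomial.X ^ i

/-!
Every hypertree `f` has `∑ f = |V| - 1 = n - 1`, and the least hyperedge `a` is never internally
inactive. So `ῑ(f) = n - 1` makes every `e ≠ a` inactive, and an inactive `e` has `f e ≥ 1`
(moving a unit away from a zero would raise the sum); hence `f = f_a`, the function vanishing only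
at `a`, and the coefficient is `0` or `1`. It is `1` iff `f_a` is a hypertree at which all `e ≠ a`
are inactive. As `f_e` is obtained from `f_a` by moving a unit from `e` to `a`, this holds when all
`f_e` are hypertrees. Conversely `f_e` is shown to be a hypertree by induction on `e`: if `e` is
inactive through some `a ≠ e' < e`, the exchange property of hypertrees (proved by exchanging
edges between two realizing spanning trees), applied to `f_{e'}` and the transferred function,
produces `f_e`.
-/

section SpanningTree

variable {α : Type*} {G τ σ : SimpleGraph α}

theorem SimpleGraph.Connected.reachable_deleteEdges_or (hG : G.Connected) (u x v : α) :
    (G.deleteEdges {s(x, v)}).Reachable u x ∨ (G.deleteEdges {s(x, v)}).Reachable u v := by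
  by_contra! h
  obtain ⟨W⟩ := hG.preconnected u x
  obtain ⟨d, -, hd₁, hd₂⟩ :=
    W.exists_boundary_dart {w | (G.deleteEdges {s(x, v)}).Reachable u w} Reachable.rfl h.1
  have hd : s(d.fst, d.snd) = s(x, v) := by
    by_contra hne
    exact hd₂ (hd₁.trans (deleteEdges_adj.mpr ⟨d.adj, hne⟩).reachable)
  rcases Sym2.eq_iff.mp hd with ⟨hx, -⟩ | ⟨hv, -⟩
  · exact h.1 (hx ▸ hd₁)
  · exact h.2 (hv ▸ hd₁)

theorem IsSpanningTree.deleteEdges_sup_edge (hτ : IsSpanningTree G τ) {x v p q : α}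
    (hpq : G.Adj p q) (hsep : ¬ (τ.deleteEdges {s(x, v)}).Reachable p q) :
    IsSpanningTree G (τ.deleteEdges {s(x, v)} ⊔ edge p q) := by
  set H := τ.deleteEdges {s(x, v)}
  have hH : H ≤ H ⊔ edge p q := le_sup_left
  have hpq' : (H ⊔ edge p q).Adj p q := Or.inr ((edge_adj ..).mpr ⟨Or.inl ⟨rfl, rfl⟩, hpq.ne⟩)
  refine ⟨sup_le ((deleteEdges_le _).trans hτ.1) (G.edge_le_iff.mpr (Or.inr hpq)), ?_,
    (hτ.2.2.anti (deleteEdges_le _)).sup_edge_of_not_reachable hsep⟩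
  -- every vertex stays joined to `x` or to `v`, and the new edge joins these two sides
  have hxv : (H ⊔ edge p q).Reachable x v := by
    rcases hτ.2.1.reachable_deleteEdges_or p x v with hp | hp <;>
      rcases hτ.2.1.reachable_deleteEdges_or q x v with hq | hq
    · exact absurd (hp.trans hq.symm) hsep
    · exact ((hp.symm.mono hH).trans hpq'.reachable).trans (hq.mono hH)
    · exact ((hq.symm.mono hH).trans hpq'.symm.reachable).trans (hp.mono hH)
    · exact absurd (hp.trans hq.symm) hsep
  have hx (u : α) : (H ⊔ edge p q).Reachable u x :=
    (hτ.2.1.reachable_deleteEdges_or u x v).elim (·.mono hH) fun h => (h.mono hH).trans hxv.symm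
  have := hτ.2.1.nonempty
  exact Connected.mk fun u w => (hx u).trans (hx w).symm

theorem IsSpanningTree.exists_exchange (hτ : IsSpanningTree G τ) (hσG : σ ≤ G) {x a : α}
    (hτxa : τ.Adj x a) (hσxa : ¬ σ.Adj x a) (hσ : σ.Reachable x a) :
    ∃ p q, σ.Adj p q ∧ ¬ τ.Adj p q ∧ IsSpanningTree G (τ.deleteEdges {s(x, a)} ⊔ edge p q) := by
  set H := τ.deleteEdges {s(x, a)}
  have hbridge : ¬ H.Reachable x a := isAcyclic_iff_forall_adj_isBridge.mp hτ.2.2 hτxa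
  -- the `σ`-walk from `x` to `a` has to leave the side of `x` in `τ` minus the edge `xa`
  obtain ⟨W⟩ := hσ
  obtain ⟨d, -, hp, hq⟩ := W.exists_boundary_dart {w | H.Reachable x w} Reachable.rfl hbridge
  have hsep : ¬ H.Reachable d.fst d.snd := fun h => hq (hp.trans h)
  refine ⟨d.fst, d.snd, d.adj, fun hτpq => ?_, hτ.deleteEdges_sup_edge (hσG d.adj) hsep⟩
  have hε : s(d.fst, d.snd) = s(x, a) := by
    by_contra hne
    exact hsep (deleteEdges_adj.mpr ⟨hτpq, hne⟩).reachable
  apply hσxa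
  rw [← mem_edgeSet, ← hε]
  exact d.adj

theorem SimpleGraph.edgeSet_deleteEdges_sup_edge_sdiff {ε : Sym2 α} {p q : α}
    (hpq : ¬ G.Adj p q) :
    (G.deleteEdges {ε} ⊔ edge p q).edgeSet \ {s(p, q)} = G.edgeSet \ {ε} := by
  ext e
  simp only [edgeSet_sup, edgeSet_deleteEdges, edgeSet_edge, Set.mem_sdiff, Set.mem_union,
    Set.mem_singleton_iff]
  have : e ∈ G.edgeSet → e ≠ s(p, q) := by rintro he rfl; exact hpq he
  tauto

theorem SimpleGraph.ncard_edgeSet_sdiff_lt_of_sdiff_eq [Finite α] {G' : SimpleGraph α}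
    {ε δ : Sym2 α} (h : G'.edgeSet \ {δ} = G.edgeSet \ {ε}) (hδ : δ ∈ σ.edgeSet)
    (hε : ε ∈ G.edgeSet \ σ.edgeSet) :
    (G'.edgeSet \ σ.edgeSet).ncard < (G.edgeSet \ σ.edgeSet).ncard := by
  have : G'.edgeSet \ σ.edgeSet = (G.edgeSet \ σ.edgeSet) \ {ε} := by
    ext e
    have := Set.ext_iff.mp h e
    simp only [Set.mem_sdiff, Set.mem_singleton_iff] at this ⊢
    have : e = δ → e ∈ σ.edgeSet := fun h => h ▸ hδ
    tauto
  rw [this]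
  exact Set.ncard_sdiff_singleton_lt_of_mem hε

theorem SimpleGraph.ncard_neighborSet_add_ite_eq [Finite α] [DecidableEq α] {G' : SimpleGraph α}
    {ε δ : Sym2 α} (hε : ε ∈ G.edgeSet) (hδ : δ ∈ G'.edgeSet)
    (h : G'.edgeSet \ {δ} = G.edgeSet \ {ε}) (u : α) :
    (G'.neighborSet u).ncard + (if u ∈ ε then 1 else 0) =
      (G.neighborSet u).ncard + (if u ∈ δ then 1 else 0) := by
  have hcard (H : SimpleGraph α) (e : Sym2 α) (he : e ∈ H.edgeSet) :
      (H.neighborSet u).ncard = (H.incidenceSet u \ {e}).ncard + if u ∈ e then 1 else 0 := by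
    rw [← Nat.card_coe_set_eq, ← Nat.card_congr (H.incidenceSetEquivNeighborSet u),
      Nat.card_coe_set_eq]
    split_ifs with hu
    · exact (Set.ncard_sdiff_singleton_add_one (s := H.incidenceSet u) ⟨he, hu⟩).symm
    · rw [Set.sdiff_singleton_eq_self (fun h => hu h.2), add_zero]
  have hinc : G'.incidenceSet u \ {δ} = G.incidenceSet u \ {ε} := by
    ext e
    have := Set.ext_iff.mp h e
    simp only [incidenceSet, Set.mem_sdiff, Set.mem_ofPred_eq, Set.mem_singleton_iff] at this ⊢
    tauto
  rw [hcard G' δ hδ, hcard G ε hε, hinc]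
  omega

end SpanningTree

section Bipartite

open Sum

variable {r : V → E → Prop}

theorem exists_forall_inr_mem_iff_of_bipGraph_adj {p q : V ⊕ E} (h : (BipGraph r).Adj p q) :
    ∃ z, ∀ y, inr y ∈ s(p, q) ↔ y = z := by
  rcases h with ⟨v, e, rfl, rfl, -⟩ | ⟨v, e, rfl, rfl, -⟩ <;> exact ⟨e, fun y => by simp⟩

theorem isBipartiteWith_of_le_bipGraph {H : SimpleGraph (V ⊕ E)} (hH : H ≤ BipGraph r) :
    H.IsBipartiteWith (Set.range inl) (Set.range inr) where
  disjoint := Set.disjoint_left.mpr (by rintro _ ⟨v, rfl⟩ ⟨e, he⟩; cases he)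
  mem_of_adj p q h := by rcases hH h with ⟨v, e, rfl, rfl, -⟩ | ⟨v, e, rfl, rfl, -⟩ <;> simp

theorem IsHypertree.sum_add_one [Fintype V] [Fintype E] {f : E → ℕ} (hf : IsHypertree r f) :
    ∑ e, f e + 1 = Fintype.card V := by
  classical
  obtain ⟨τ, hτ, hdeg⟩ := hf
  have hbip : τ.IsBipartiteWith (Finset.univ.map .inl : Finset (V ⊕ E))
      (Finset.univ.map .inr : Finset (V ⊕ E)) := by
    simpa using isBipartiteWith_of_le_bipGraph hτ.1
  have hsum := isBipartiteWith_sum_degrees_eq_card_edges' hbip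
  have htree := IsTree.card_edgeFinset ⟨hτ.2.1, hτ.2.2⟩
  have hdeg' (e : E) : τ.degree (inr e) = f e + 1 := by
    rw [← hdeg e, Set.ncard_eq_toFinset_card', ← neighborFinset_def, card_neighborFinset_eq_degree]
  have hE : ∑ e : E, τ.degree (Function.Embedding.inr e) = ∑ e, f e + Fintype.card E :=
    (Finset.sum_congr rfl fun e _ => hdeg' e).trans (by simp [Finset.sum_add_distrib])
  rw [Finset.sum_map, hE] at hsum
  rw [Fintype.card_sum] at htree
  omega

noncomputable def hyperedgeDegree (τ : SimpleGraph (V ⊕ E)) (e : E) : ℕ :=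
  (τ.neighborSet (inr e)).ncard

variable [Finite V] [Finite E] {τ σ : SimpleGraph (V ⊕ E)}

theorem exists_swap_hyperedgeDegree [DecidableEq E] (hτ : IsSpanningTree (BipGraph r) τ)
    (hσ : IsSpanningTree (BipGraph r) σ) {x : E}
    (hx : hyperedgeDegree σ x < hyperedgeDegree τ x) :
    ∃ z τ', IsSpanningTree (BipGraph r) τ' ∧
      (τ'.edgeSet \ σ.edgeSet).ncard < (τ.edgeSet \ σ.edgeSet).ncard ∧
      ∀ y, hyperedgeDegree τ' y + (if y = x then 1 else 0) =
        hyperedgeDegree τ y + (if y = z then 1 else 0) := by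
  classical
  obtain ⟨a, hτa, hσa⟩ : ∃ a, τ.Adj (inr x) a ∧ ¬ σ.Adj (inr x) a := by
    by_contra! h
    exact (Set.ncard_le_ncard h).not_gt hx
  obtain ⟨p, q, hσpq, hτpq, hτ'⟩ :=
    hτ.exists_exchange hσ.1 hτa hσa (hσ.2.1.preconnected _ _)
  obtain ⟨z, hz⟩ := exists_forall_inr_mem_iff_of_bipGraph_adj (hσ.1 hσpq)
  obtain ⟨x', hx'⟩ := exists_forall_inr_mem_iff_of_bipGraph_adj (hτ.1 hτa)
  obtain rfl : x = x' := (hx' x).mp (Sym2.mem_mk_left _ _)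
  have hE := edgeSet_deleteEdges_sup_edge_sdiff (ε := s(inr x, a)) hτpq
  refine ⟨z, _, hτ', ncard_edgeSet_sdiff_lt_of_sdiff_eq hE hσpq ⟨hτa, hσa⟩, fun y => ?_⟩
  have hpq : s(p, q) ∈ (τ.deleteEdges {s(inr x, a)} ⊔ edge p q).edgeSet :=
    Or.inr ((edge_adj ..).mpr ⟨Or.inl ⟨rfl, rfl⟩, hσpq.ne⟩)
  simpa only [hyperedgeDegree, hx', hz] using ncard_neighborSet_add_ite_eq hτa hpq hE (inr y)

theorem exists_hyperedgeDegree_exchange [DecidableEq E] (hτ : IsSpanningTree (BipGraph r) τ)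
    (hσ : IsSpanningTree (BipGraph r) σ) {x : E}
    (hx : hyperedgeDegree σ x < hyperedgeDegree τ x) :
    ∃ z, hyperedgeDegree τ z < hyperedgeDegree σ z ∧ ∃ π, IsSpanningTree (BipGraph r) π ∧
      ∀ y, hyperedgeDegree π y + (if y = x then 1 else 0) =
        hyperedgeDegree τ y + (if y = z then 1 else 0) := by
  induction hn : (τ.edgeSet \ σ.edgeSet).ncard using Nat.strong_induction_on generalizing τ x
    with | _ n ih =>
  obtain ⟨z, τ', hτ', hlt, hdeg⟩ := exists_swap_hyperedgeDegree hτ hσ hx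
  by_cases hz : hyperedgeDegree τ z < hyperedgeDegree σ z
  · exact ⟨z, hz, τ', hτ', hdeg⟩
  -- otherwise the surplus now sits at `z`; continue from `τ'`, which is closer to `σ`
  have hz' : hyperedgeDegree σ z < hyperedgeDegree τ' z := by
    have h := hdeg z
    rcases eq_or_ne z x with rfl | hzx
    · rw [if_pos rfl] at h
      omega
    · rw [if_neg hzx, if_pos rfl] at h
      omega
  obtain ⟨z₂, hz₂, π, hπ, hdeg₂⟩ := ih _ (hn ▸ hlt) hτ' hz' rfl
  have hz₂x : z₂ ≠ x := by
    rintro rfl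
    have h := hdeg z₂
    split_ifs at h <;> subst_vars <;> omega
  refine ⟨z₂, ?_, π, hπ, fun y => ?_⟩
  · have h := hdeg z₂
    split_ifs at h <;> subst_vars <;> omega
  · have := hdeg y
    have := hdeg₂ y
    omega

theorem IsHypertree.exchange {f g : E → ℕ} (hf : IsHypertree r f) (hg : IsHypertree r g) {x : E}
    (hx : g x < f x) : ∃ z, f z < g z ∧ IsHypertree r (Transfer f x z) := by
  classical
  obtain ⟨τ, hτ, hτf⟩ := hf
  obtain ⟨σ, hσ, hσg⟩ := hg
  obtain ⟨z, hz, π, hπ, hπτ⟩ := exists_hyperedgeDegree_exchange hτ hσ (x := x)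
    (by simp only [hyperedgeDegree, hτf, hσg]; omega)
  simp only [hyperedgeDegree, hτf, hσg] at hz hπτ
  refine ⟨z, by omega, π, hπ, fun y => ?_⟩
  have h := hπτ y
  unfold Transfer
  split_ifs at h ⊢ <;> subst_vars <;> omega

end Bipartite

theorem Nat.card_subtype_eq_card_sub_one_iff {α : Type*} [Fintype α] {P : α → Prop} {a : α}
    (ha : ¬ P a) : Nat.card {x // P x} = Fintype.card α - 1 ↔ ∀ x, x ≠ a → P x := by
  classical
  have hsub : Finset.univ.filter P ⊆ Finset.univ.erase a := fun x hx =>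
    Finset.mem_erase.mpr ⟨fun h => ha (h ▸ (Finset.mem_filter.mp hx).2), Finset.mem_univ x⟩
  rw [Nat.card_eq_fintype_card, Fintype.card_subtype, ← Finset.card_univ,
    ← Finset.card_erase_of_mem (Finset.mem_univ a)]
  constructor
  · intro h x hx
    have hx' : x ∈ Finset.univ.filter P :=
      Finset.eq_of_subset_of_card_le hsub h.ge ▸ Finset.mem_erase.mpr ⟨hx, Finset.mem_univ x⟩
    exact (Finset.mem_filter.mp hx').2
  · intro h
    congr 1
    ext x
    simp only [Finset.mem_filter, Finset.mem_univ, true_and, Finset.mem_erase, and_true]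
    exact ⟨fun hx hxa => ha (hxa ▸ hx), h x⟩

section Counting

variable {r : V → E → Prop}

def oneExcept [DecidableEq E] (a : E) : E → ℕ := fun e => if e = a then 0 else 1

theorem transfer_oneExcept [DecidableEq E] {e a : E} (h : e ≠ a) :
    Transfer (oneExcept a) e a = oneExcept e := by
  funext y
  unfold Transfer oneExcept
  split_ifs <;> subst_vars <;> simp_all

theorem sum_oneExcept_add_one [Fintype E] [DecidableEq E] (a : E) :
    ∑ e, oneExcept a e + 1 = Fintype.card E := by
  simp [oneExcept, Finset.sum_ite, Finset.filter_ne', Finset.card_erase_of_mem]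
  exact Nat.sub_add_cancel (Fintype.card_pos_iff.mpr ⟨a⟩)

theorem eq_oneExcept_of_sum [Fintype E] [DecidableEq E] {f : E → ℕ} {a : E}
    (hsum : ∑ e, f e + 1 = Fintype.card E) (hf : ∀ e, e ≠ a → 1 ≤ f e) : f = oneExcept a := by
  have hle : ∀ e ∈ Finset.univ, oneExcept a e ≤ f e := fun e _ => by
    unfold oneExcept
    split_ifs with h
    exacts [Nat.zero_le _, hf e h]
  have := (Finset.sum_eq_sum_iff_of_le hle).mp (by have := sum_oneExcept_add_one a; omega)
  funext e
  exact (this e (Finset.mem_univ e)).symm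

theorem sum_transfer_of_eq_zero [Fintype E] {f : E → ℕ} {e e' : E} (hfe : f e = 0)
    (hne : e' ≠ e) : ∑ y, Transfer f e e' y = ∑ y, f y + 1 := by
  classical
  have h (y : E) : Transfer f e e' y = f y + if y = e' then 1 else 0 := by
    unfold Transfer
    split_ifs <;> subst_vars <;> simp_all
  simp [h, Finset.sum_add_distrib]

theorem IsHypertree.one_le_of_isHypertree_transfer [Fintype V] [Fintype E] {f : E → ℕ}
    {e e' : E} (hf : IsHypertree r f) (hT : IsHypertree r (Transfer f e e')) (hne : e' ≠ e) :
    1 ≤ f e := by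
  by_contra! h0
  have := hT.sum_add_one
  rw [sum_transfer_of_eq_zero (Nat.lt_one_iff.mp h0) hne, ← hf.sum_add_one] at this
  omega

variable [Fintype E] [LinearOrder E]

theorem intInact_eq_card_sub_one_iff {a : E} (ha : IsBot a) (f : E → ℕ) :
    intInact r f = Fintype.card E - 1 ↔ ∀ e, e ≠ a → ∃ e' < e, IsHypertree r (Transfer f e e') :=
  Nat.card_subtype_eq_card_sub_one_iff fun ⟨e', he', _⟩ => (ha e').not_gt he'

variable [Fintype V] [DecidableEq E]

theorem IsHypertree.eq_oneExcept (hbal : Fintype.card V = Fintype.card E) {a : E} (ha : IsBot a)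
    {f : E → ℕ} (hf : IsHypertree r f) (hin : intInact r f = Fintype.card E - 1) :
    f = oneExcept a :=
  eq_oneExcept_of_sum (hbal ▸ hf.sum_add_one) fun e he =>
    let ⟨_, he', hT⟩ := (intInact_eq_card_sub_one_iff ha f).mp hin e he
    hf.one_le_of_isHypertree_transfer hT he'.ne

theorem isHypertree_oneExcept_of_intInact {a : E} (ha : IsBot a)
    (h : IsHypertree r (oneExcept a)) (hin : intInact r (oneExcept a) = Fintype.card E - 1)
    (e : E) : IsHypertree r (oneExcept e) := by
  rw [intInact_eq_card_sub_one_iff ha] at hin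
  induction e using WellFoundedLT.induction with | _ e ih =>
  rcases eq_or_ne e a with rfl | hea
  · exact h
  obtain ⟨e', he', hT⟩ := hin e hea
  rcases eq_or_ne e' a with rfl | he'a
  · rwa [transfer_oneExcept hea] at hT
  obtain ⟨z, hz, hTz⟩ := (ih e' he').exchange hT (x := e) (by
    simp [Transfer, oneExcept, hea, he'.ne'])
  -- `Transfer (oneExcept a) e e'` exceeds `oneExcept e'` only at `e'`
  obtain rfl : z = e' := by
    by_contra hze
    simp only [Transfer, oneExcept] at hz
    split_ifs at hz <;> subst_vars <;> simp_all
  rwa [transfer_oneExcept he'.ne'] at hTz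

end Counting

theorem coeff_interiorPoly [Fintype E] [LT E] (r : V → E → Prop) {i : ℕ}
    (hi : i ≤ Fintype.card E) :
    (interiorPoly r).coeff i = Nat.card {f : E → ℕ // IsHypertree r f ∧ intInact r f = i} := by
  simp [interiorPoly, Polynomial.finsetSum_coeff, Nat.lt_succ_of_le hi]

/-- for a connected balanced bipartite graph with `|V| = |E| = n`, the
coefficient of `x^(n-1)` in `I_G` is nonzero iff every function `f_i` (with `f_i(e_i) = 0`
and `f_i(e_j) = 1` for `j ≠ i`) is a hypertree; moreover this coefficient is at most `1`. -/
theorem interiorPoly_top_coeff_balanced {V E : Type*} [Fintype V] [Fintype E] [LinearOrder E]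
    [DecidableEq E] (r : V → E → Prop) (hconn : (BipGraph r).Connected)
    (hbal : Fintype.card V = Fintype.card E) :
    ((interiorPoly r).coeff (Fintype.card E - 1) ≠ 0 ↔
        ∀ e : E, IsHypertree r (fun e' => if e' = e then 0 else 1)) ∧
      (interiorPoly r).coeff (Fintype.card E - 1) ≤ 1 := by
  have : Nonempty E := by
    rcases nonempty_sum.mp hconn.nonempty with hV | hE
    · exact Fintype.card_pos_iff.mp (hbal ▸ Fintype.card_pos_iff.mpr hV)
    · exact hE
  obtain ⟨a, ha⟩ : ∃ a : E, IsBot a :=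
    ⟨Finset.univ.min' Finset.univ_nonempty, fun e => Finset.min'_le _ e (Finset.mem_univ e)⟩
  set M := {f : E → ℕ // IsHypertree r f ∧ intInact r f = Fintype.card E - 1}
  have hM (f : M) : f.1 = oneExcept a := f.2.1.eq_oneExcept hbal ha f.2.2
  have : Subsingleton M := ⟨fun f g => Subtype.ext ((hM f).trans (hM g).symm)⟩
  rw [coeff_interiorPoly r (Nat.sub_le _ _)]
  refine ⟨?_, by exact_mod_cast Finite.card_le_one_iff_subsingleton.mpr this⟩
  rw [Nat.cast_ne_zero, Nat.card_ne_zero]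
  constructor
  · rintro ⟨⟨f, hf, hin⟩, -⟩
    obtain rfl := hM ⟨f, hf, hin⟩
    exact isHypertree_oneExcept_of_intInact ha hf hin
  · intro h
    refine ⟨⟨⟨oneExcept a, h a, (intInact_eq_card_sub_one_iff ha _).mpr fun e he => ?_⟩⟩,
      Finite.of_subsingleton⟩
    exact ⟨a, (ha e).lt_of_ne he.symm, by rw [transfer_oneExcept he]; exact h e⟩
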